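/- Let L ≥ 6 and x_1 = (1,1,0,1,0,...,0), x_2 = (1,0,1,1,0,...,0) in {0,1}^L. Then sum over k in Z_L^3 of (A_k(x_1) − A_k(x_2))^2 = 12/L. -/

import Mathlib

/-!
Summing over `k` first, `∑ₖ A_k(x) A_k(y) = (1/L) ∑_d C_{xy}(d)³` with the cross-correlation
`C_{xy}(d) = ∑_v x_v y_{v+d}`, so the sum of squares is `(1/L) ∑_d (C₁₁³ - 2 C₁₂³ + C₂₂³)`.
For the indicators of `{0,1,3}` and `{0,2,3}`, `C(d)` counts the representations of `d` as a
difference `b - a`. For `L ≥ 7` nothing wraps around and the counts are the integer ones, giving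
`∑ C₁₁³ = ∑ C₂₂³ = 33` and `∑ C₁₂³ = 27`; for `L = 6`, where `3 ≡ -3`, they are `39` and `33`.
In both cases the bracket sums to `12`.
-/

noncomputable def autocorr {L : ℕ} [NeZero L] {d : ℕ} (k : Fin d → ZMod L)
    (x : ZMod L → ℝ) : ℝ :=
  (1 / (L : ℝ)) * ∑ s : ZMod L, ∏ i, x (k i + s)

/-- `x₁ = (1,1,0,1,0,…,0)`, with ones at positions `0,1,3` (0-indexed). -/
noncomputable def xOne (L : ℕ) : ZMod L → ℝ :=
  fun j => if j = 0 ∨ j = 1 ∨ j = 3 then 1 else 0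

/-- `x₂ = (1,0,1,1,0,…,0)`, with ones at positions `0,2,3` (0-indexed). -/
noncomputable def xTwo (L : ℕ) : ZMod L → ℝ :=
  fun j => if j = 0 ∨ j = 2 ∨ j = 3 then 1 else 0

open Finset

def crossCorr {G : Type*} [AddCommGroup G] [Fintype G] (x y : G → ℝ) (d : G) : ℝ :=
  ∑ v, x v * y (v + d)

lemma sum_sub_sub_eq_card_mul {G : Type*} [AddCommGroup G] [Fintype G] (f : G → ℝ) :
    ∑ s : G, ∑ t : G, f (t - s) = Fintype.card G * ∑ d, f d := by
  have h (s : G) : ∑ t, f (t - s) = ∑ d, f d :=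
    Fintype.sum_equiv (Equiv.subRight s) _ _ fun _ => rfl
  simp only [h, sum_const, card_univ, nsmul_eq_mul]

section
variable {L : ℕ} [NeZero L]

lemma sum_autocorr_mul_autocorr {n : ℕ} (x y : ZMod L → ℝ) :
    ∑ k : Fin n → ZMod L, autocorr k x * autocorr k y
      = 1 / L * ∑ d, crossCorr x y d ^ n := by
  have hL : (L : ℝ) ≠ 0 := NeZero.ne _
  have shift (s t : ZMod L) : ∑ u, x (u + s) * y (u + t) = crossCorr x y (t - s) :=
    Fintype.sum_equiv (Equiv.addRight s) _ _ fun u => by simp [add_assoc]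
  calc ∑ k : Fin n → ZMod L, autocorr k x * autocorr k y
      = (1 / L) ^ 2 * ∑ s, ∑ t, ∑ k : Fin n → ZMod L, ∏ i, x (k i + s) * y (k i + t) := by
        simp only [autocorr, mul_mul_mul_comm _ (∑ s, _), sum_mul_sum, ← prod_mul_distrib,
          ← mul_sum, ← pow_two]
        rw [sum_comm]
        simp only [sum_comm (γ := Fin n → ZMod L)]
    _ = (1 / L) ^ 2 * ∑ s, ∑ t, crossCorr x y (t - s) ^ n := by
        simp only [← shift, Fintype.sum_pow]
    _ = 1 / L * ∑ d, crossCorr x y d ^ n := by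
        rw [sum_sub_sub_eq_card_mul (crossCorr x y · ^ n), ZMod.card]
        field_simp

lemma sum_sq_autocorr_sub {n : ℕ} (x y : ZMod L → ℝ) :
    ∑ k : Fin n → ZMod L, (autocorr k x - autocorr k y) ^ 2
      = 1 / L * ∑ d, (crossCorr x x d ^ n - 2 * crossCorr x y d ^ n + crossCorr y y d ^ n) := by
  have expand (a b : ℝ) : (a - b) ^ 2 = a * a - 2 * (a * b) + b * b := by ring
  simp only [expand, sum_add_distrib, sum_sub_distrib, ← mul_sum, sum_autocorr_mul_autocorr]
  ring

end

lemma card_filter_eq_ite_mem_image {α β : Type*} [DecidableEq β] {A : Finset α} {φ : α → β}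
    (hφ : Set.InjOn φ A) (j : β) :
    #{a ∈ A | φ a = j} = if j ∈ A.image φ then 1 else 0 := by
  split_ifs with hj
  · obtain ⟨a, ha, rfl⟩ := mem_image.mp hj
    rw [card_eq_one]
    refine ⟨a, ext fun b => ?_⟩
    simp only [mem_filter, mem_singleton]
    exact ⟨fun ⟨hb, h⟩ => hφ hb ha h, by rintro rfl; exact ⟨ha, rfl⟩⟩
  · simpa [card_eq_zero, filter_eq_empty_iff] using hj

lemma sum_card_filter_pow_of_injOn {α β γ : Type*} [DecidableEq β] [DecidableEq γ] [Fintype γ]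
    {s : Finset α} {T : Finset β} (e : α → β) {φ : β → γ} (hT : ∀ p ∈ s, e p ∈ T)
    (hφ : Set.InjOn φ T) {n : ℕ} (hn : n ≠ 0) :
    ∑ d : γ, #{p ∈ s | φ (e p) = d} ^ n = ∑ t ∈ T, #{p ∈ s | e p = t} ^ n := by
  rw [← sum_subset (subset_univ (T.image φ)), sum_image hφ]
  · refine sum_congr rfl fun t ht => ?_
    congr 2
    exact filter_congr fun p hp => hφ.eq_iff (hT p hp) ht
  · intro d _ hd
    rw [card_eq_zero.mpr, zero_pow hn]
    exact filter_eq_empty_iff.mpr fun p hp hpd => hd (hpd ▸ mem_image_of_mem φ (hT p hp))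

lemma intCast_injOn_Icc {L : ℕ} {a b : ℤ} (h : b - a < L) :
    Set.InjOn (Int.cast : ℤ → ZMod L) (Icc a b) := by
  intro u hu v hv huv
  simp only [coe_Icc, Set.mem_Icc] at hu hv
  have := Int.eq_zero_of_abs_lt_dvd ((ZMod.intCast_eq_intCast_iff_dvd_sub _ _ _).mp huv)
    (abs_lt.mpr ⟨by omega, by omega⟩)
  omega

def residueCount (L : ℕ) (A : Finset ℤ) (j : ZMod L) : ℕ := #{a ∈ A | ((a : ℤ) : ZMod L) = j}

def diffCount (L : ℕ) (A B : Finset ℤ) (d : ZMod L) : ℕ :=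
  #{p ∈ A ×ˢ B | ((p.2 - p.1 : ℤ) : ZMod L) = d}

lemma residueCount_eq_ite {L : ℕ} {A : Finset ℤ} {a b : ℤ} (hA : A ⊆ Icc a b) (h : b - a < L)
    (j : ZMod L) : (residueCount L A j : ℝ) = if j ∈ A.image Int.cast then 1 else 0 := by
  rw [residueCount,
    card_filter_eq_ite_mem_image ((intCast_injOn_Icc h).mono (by exact_mod_cast hA))]
  split_ifs <;> simp

lemma xOne_eq {L : ℕ} (hL : 4 ≤ L) : xOne L = fun j => (residueCount L {0, 1, 3} j : ℝ) := by
  ext j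
  rw [residueCount_eq_ite (a := 0) (b := 3) (by decide) (by omega)]
  simp [xOne]

lemma xTwo_eq {L : ℕ} (hL : 4 ≤ L) : xTwo L = fun j => (residueCount L {0, 2, 3} j : ℝ) := by
  ext j
  rw [residueCount_eq_ite (a := 0) (b := 3) (by decide) (by omega)]
  simp [xTwo]

section
variable {L : ℕ} [NeZero L]

lemma crossCorr_residueCount (A B : Finset ℤ) (d : ZMod L) :
    crossCorr (fun j => (residueCount L A j : ℝ)) (fun j => residueCount L B j) d
      = diffCount L A B d := by
  simp only [crossCorr, residueCount, diffCount, card_filter, Nat.cast_sum, Nat.cast_ite,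
    Nat.cast_one, Nat.cast_zero, sum_mul_sum, sum_product]
  rw [sum_comm]
  refine sum_congr rfl fun a _ => ?_
  rw [sum_comm]
  refine sum_congr rfl fun b _ => ?_
  simp only [ite_mul, one_mul, zero_mul, sum_ite_eq, mem_univ, if_true, Int.cast_sub,
    sub_eq_iff_eq_add']

lemma sum_diffCount_pow {A B : Finset ℤ} {m : ℤ} (hA : A ⊆ Icc 0 m) (hB : B ⊆ Icc 0 m)
    (hL : 2 * m < L) {n : ℕ} (hn : n ≠ 0) :
    ∑ d : ZMod L, diffCount L A B d ^ n
      = ∑ t ∈ Icc (-m) m, #{p ∈ A ×ˢ B | p.2 - p.1 = t} ^ n := by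
  refine sum_card_filter_pow_of_injOn (fun p : ℤ × ℤ => p.2 - p.1) (fun p hp => ?_)
    (intCast_injOn_Icc (by omega)) hn
  obtain ⟨ha, hb⟩ := mem_product.mp hp
  have := mem_Icc.mp (hA ha)
  have := mem_Icc.mp (hB hb)
  exact mem_Icc.mpr ⟨by omega, by omega⟩

lemma sum_diffCount_pow_three (hL : 6 ≤ L) :
    ∑ d : ZMod L, diffCount L {0, 1, 3} {0, 1, 3} d ^ 3
        = ∑ d : ZMod L, diffCount L {0, 1, 3} {0, 2, 3} d ^ 3 + 6 ∧
      ∑ d : ZMod L, diffCount L {0, 2, 3} {0, 2, 3} d ^ 3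
        = ∑ d : ZMod L, diffCount L {0, 1, 3} {0, 1, 3} d ^ 3 := by
  obtain rfl | hL := hL.eq_or_lt
  · -- `decide` refuses a goal mentioning the local `NeZero 6` instance
    exact of_decide_eq_true rfl
  · have hL : 2 * (3 : ℤ) < L := by omega
    have h₁ : ({0, 1, 3} : Finset ℤ) ⊆ Icc 0 3 := by decide
    have h₂ : ({0, 2, 3} : Finset ℤ) ⊆ Icc 0 3 := by decide
    rw [sum_diffCount_pow h₁ h₁ hL three_ne_zero, sum_diffCount_pow h₁ h₂ hL three_ne_zero,
      sum_diffCount_pow h₂ h₂ hL three_ne_zero]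
    decide

end

theorem sum_sq_diff_eq_twelve_div_L {L : ℕ} [NeZero L] (hL : 6 ≤ L) :
    ∑ k : Fin 3 → ZMod L, (autocorr k (xOne L) - autocorr k (xTwo L)) ^ 2
      = 12 / (L : ℝ) := by
  obtain ⟨h₁₂, h₂₂⟩ := sum_diffCount_pow_three hL
  rw [sum_sq_autocorr_sub, xOne_eq (by omega), xTwo_eq (by omega)]
  simp only [crossCorr_residueCount, sum_add_distrib, sum_sub_distrib, ← mul_sum]
  have h₁₂' : (∑ d : ZMod L, (diffCount L {0, 1, 3} {0, 1, 3} d : ℝ) ^ 3)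
      = ∑ d : ZMod L, (diffCount L {0, 1, 3} {0, 2, 3} d : ℝ) ^ 3 + 6 := by exact_mod_cast h₁₂
  have h₂₂' : (∑ d : ZMod L, (diffCount L {0, 2, 3} {0, 2, 3} d : ℝ) ^ 3)
      = ∑ d : ZMod L, (diffCount L {0, 1, 3} {0, 1, 3} d : ℝ) ^ 3 := by exact_mod_cast h₂₂
  rw [h₂₂', h₁₂']
  ring
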